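/- arXiv:2209.06402 — 4 statements merged into one kernel-verified Lean document; each statement's English description precedes it below -/
import Mathlib

section
/- Let h, m, n be natural numbers with h ≥ 2, m ≥ 1, and n ≥ (h−1)(2m−1). Then 2 · C(n−m, h−1) ≥ C(n−1, h−1). -/
open Finset

lemma aux1 (d k : ℕ) (b : ℕ → ℕ) (hb : ∀ i < k, (2 * k - 1) * d ≤ b i) :
    ∀ j ≤ k, (2 * k - j) * ∏ i ∈ range j, (b i + d) ≤ 2 * k * ∏ i ∈ range j, b i := by
  intro j
  induction j with
  | zero => simp
  | succ j ih =>
    intro hj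
    have ih' := ih (le_of_lt hj)
    rw [prod_range_succ, prod_range_succ]
    have hbj := hb j hj
    have h1 : (2 * k - (j + 1)) * (b j + d) ≤ (2 * k - j) * b j := by
      have hd : (2 * k - (j + 1)) * d ≤ b j := by
        calc (2 * k - (j + 1)) * d ≤ (2 * k - 1) * d := by
              apply Nat.mul_le_mul_right; omega
          _ ≤ b j := hbj
      have h2 : (2 * k - j) = (2 * k - (j + 1)) + 1 := by omega
      rw [h2]
      nlinarith [hd]
    calc (2 * k - (j + 1)) * ((∏ i ∈ range j, (b i + d)) * (b j + d))
        = ((2 * k - (j + 1)) * (b j + d)) * ∏ i ∈ range j, (b i + d) := by ring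
      _ ≤ ((2 * k - j) * b j) * ∏ i ∈ range j, (b i + d) :=
          Nat.mul_le_mul_right _ h1
      _ = b j * ((2 * k - j) * ∏ i ∈ range j, (b i + d)) := by ring
      _ ≤ b j * (2 * k * ∏ i ∈ range j, b i) := Nat.mul_le_mul_left _ ih'
      _ = 2 * k * ((∏ i ∈ range j, b i) * b j) := by ring

lemma aux2 (d k n : ℕ) (hn : (k + 1) * (2 * d + 1) ≤ n) :
    Nat.descFactorial (n - 1) (k + 1) ≤ 2 * Nat.descFactorial (n - (d + 1)) (k + 1) := by
  rw [Nat.descFactorial_eq_prod_range, Nat.descFactorial_eq_prod_range]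
  set K := k + 1 with hK
  have hb : ∀ i < K, (2 * K - 1) * d ≤ n - (d + 1) - i := by
    intro i hi
    have h1 : 2 * K - 1 = 2 * k + 1 := by omega
    rw [h1]
    have h2 : (2 * k + 1) * d + (d + 1) + i ≤ K * (2 * d + 1) := by rw [hK]; nlinarith [hi]
    omega
  have claim := aux1 d K (fun i => n - (d + 1) - i) hb K le_rfl
  have h2 : (2 * K - K) = K := by omega
  rw [h2] at claim
  have hle : ∏ i ∈ range K, (n - 1 - i) ≤ ∏ i ∈ range K, ((n - (d + 1) - i) + d) := by
    apply Finset.prod_le_prod' <;> intro i _ <;> omega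
  have hfin : K * ∏ i ∈ range K, (n - 1 - i) ≤ K * (2 * ∏ i ∈ range K, (n - (d + 1) - i)) := by
    calc K * ∏ i ∈ range K, (n - 1 - i)
        ≤ K * ∏ i ∈ range K, ((n - (d + 1) - i) + d) := Nat.mul_le_mul_left _ hle
      _ ≤ 2 * K * ∏ i ∈ range K, (n - (d + 1) - i) := claim
      _ = K * (2 * ∏ i ∈ range K, (n - (d + 1) - i)) := by ring
  exact Nat.le_of_mul_le_mul_left hfin (by omega)

theorem stmt1 (h m n : ℕ) (hh : 2 ≤ h) (hm : 1 ≤ m) (hn : (h - 1) * (2 * m - 1) ≤ n) :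
    Nat.choose (n - 1) (h - 1) ≤ 2 * Nat.choose (n - m) (h - 1) := by
  obtain ⟨k, hk⟩ : ∃ k, h - 1 = k + 1 := ⟨h - 2, by omega⟩
  obtain ⟨d, hd⟩ : ∃ d, m = d + 1 := ⟨m - 1, by omega⟩
  subst hd
  rw [hk]
  have hn' : (k + 1) * (2 * d + 1) ≤ n := by
    rw [hk, (by omega : 2 * (d + 1) - 1 = 2 * d + 1)] at hn; exact hn
  have key := aux2 d k n hn'
  rw [Nat.descFactorial_eq_factorial_mul_choose, Nat.descFactorial_eq_factorial_mul_choose] at key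
  have key2 : Nat.factorial (k + 1) * Nat.choose (n - 1) (k + 1) ≤
      Nat.factorial (k + 1) * (2 * Nat.choose (n - (d + 1)) (k + 1)) := by
    calc Nat.factorial (k + 1) * Nat.choose (n - 1) (k + 1)
        ≤ 2 * (Nat.factorial (k + 1) * Nat.choose (n - (d + 1)) (k + 1)) := key
      _ = Nat.factorial (k + 1) * (2 * Nat.choose (n - (d + 1)) (k + 1)) := by ring
  exact Nat.le_of_mul_le_mul_left key2 (Nat.factorial_pos (k + 1))
end

section
/- Let h, m, n be natural numbers with h ≥ 4, m ≥ 1, and n ≥ (h−1)(2m−1). Then 3·C(n−m, h−1) + 3·(m−1)·C(n−m, h−2) + 3 > 2·C(n−1, h−1). -/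
open Finset

/-- Hockey-stick style identity obtained by repeated Pascal expansion. -/
lemma choose_ident (H n : ℕ) : ∀ m', m' + 1 ≤ n →
    Nat.choose (n-1) (H+3) =
      Nat.choose (n-(m'+1)) (H+3) + m' * Nat.choose (n-(m'+1)) (H+2)
        + ∑ k ∈ Finset.range m', k * Nat.choose (n-2-k) (H+1) := by
  intro m'
  induction m' with
  | zero => simp
  | succ M ih =>
    intro hMn
    have ihh := ih (by omega)
    rw [Finset.sum_range_succ]
    have hs : n - (M+1) = (n - (M+2)) + 1 := by omega
    have hs2 : n - 2 - M = n - (M+2) := by omega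
    rw [ihh, hs, hs2]
    set s := n - (M+2) with hsdef
    rw [Nat.choose_succ_succ (s) (H+2), Nat.choose_succ_succ (s) (H+1)]
    ring

lemma mul_ident (H b : ℕ) :
    (H+2) * ((H+3) * Nat.choose (b+2) (H+3)) = (b+2) * ((b+1) * Nat.choose b (H+1)) := by
  have e1 : (b+1) * Nat.choose b (H+1) = Nat.choose (b+1) (H+2) * (H+2) :=
    Nat.add_one_mul_choose_eq b (H+1)
  have e2 : (b+2) * Nat.choose (b+1) (H+2) = Nat.choose (b+2) (H+3) * (H+3) :=
    Nat.add_one_mul_choose_eq (b+1) (H+2)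
  calc (H+2) * ((H+3) * Nat.choose (b+2) (H+3))
      = (Nat.choose (b+2) (H+3) * (H+3)) * (H+2) := by ring
    _ = ((b+2) * Nat.choose (b+1) (H+2)) * (H+2) := by rw [e2]
    _ = (b+2) * (Nat.choose (b+1) (H+2) * (H+2)) := by ring
    _ = (b+2) * ((b+1) * Nat.choose b (H+1)) := by rw [e1]

theorem stmt2 (h m n : ℕ) (hh : 4 ≤ h) (hm : 1 ≤ m) (hn : (h - 1) * (2 * m - 1) ≤ n) :
    3 * Nat.choose (n - m) (h - 1) + 3 * (m - 1) * Nat.choose (n - m) (h - 2) + 3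
      > 2 * Nat.choose (n - 1) (h - 1) := by
  obtain ⟨H, rfl⟩ : ∃ H, h = H + 4 := ⟨h - 4, by omega⟩
  obtain ⟨M, rfl⟩ : ∃ M, m = M + 1 := ⟨m - 1, by omega⟩
  have eh1 : H + 4 - 1 = H + 3 := rfl
  have eh2 : H + 4 - 2 = H + 2 := rfl
  have em : M + 1 - 1 = M := rfl
  have em2 : 2 * (M + 1) - 1 = 2 * M + 1 := by omega
  rw [eh1, eh2, em]
  rw [eh1, em2] at hn
  -- n is large
  have h3 : 3 * (2 * M + 1) ≤ (H + 3) * (2 * M + 1) :=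
    Nat.mul_le_mul_right _ (by omega)
  have hn3 : 3 ≤ n := by omega
  have hmn : M + 1 ≤ n := by omega
  obtain ⟨b, rfl⟩ : ∃ b, n = b + 3 := ⟨n - 3, by omega⟩
  have key := choose_ident H (b+3) M hmn
  simp only [show b+3-1 = b+2 from rfl, show b+3-2 = b+1 from rfl,
    show b+3-3 = b from rfl] at key ⊢
  set S := ∑ k ∈ Finset.range M, k * Nat.choose (b+1-k) (H+1) with hS
  -- bound on S
  have hSle : 3 * S ≤ Nat.choose (b+2) (H+3) := by
    set T := Nat.choose b (H+1) with hT
    have hterm : S ≤ (∑ k ∈ Finset.range M, k) * T := by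
      rw [hS, Finset.sum_mul]
      apply Finset.sum_le_sum
      intro k hk
      rcases k with _ | k
      · simp
      · exact Nat.mul_le_mul_left _ (Nat.choose_le_choose _ (by omega))
    have hgauss : (∑ k ∈ Finset.range M, k) * 2 = M * (M - 1) :=
      Finset.sum_range_id_mul_two M
    have h2S : 2 * S ≤ M * (M-1) * T := by
      calc 2 * S ≤ 2 * ((∑ k ∈ Finset.range M, k) * T) := by omega
        _ = ((∑ k ∈ Finset.range M, k) * 2) * T := by ring
        _ = M * (M-1) * T := by rw [hgauss]
    -- arithmetic inequality
    have harith : 3 * (M * (M-1)) * ((H+3)*(H+2)) ≤ 2 * ((b+2) * (b+1)) := by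
      rcases M with _ | M0
      · simp
      · have e : M0 + 1 - 1 = M0 := rfl
        rw [e]
        have hx : 2*((H+3)*(M0+1)) + H + 3 ≤ b + 3 := by
          calc 2*((H+3)*(M0+1)) + H + 3 = (H+3) * (2*(M0+1)+1) := by ring
            _ ≤ b + 3 := hn
        have hPQ : (H+3)*(M0+1) = (H+2)*(M0+1) + (M0+1) := by ring
        set P := (H+3)*(M0+1) with hP
        set Q := (H+2)*(M0+1) with hQ
        have ha : 2*P ≤ b+2 := by omega
        have hb2 : 2*Q ≤ b+1 := by omega
        calc 3 * ((M0+1) * M0) * ((H+3)*(H+2))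
            ≤ 8 * ((M0+1) * (M0+1)) * ((H+3)*(H+2)) :=
              Nat.mul_le_mul_right _
                (Nat.mul_le_mul (by norm_num) (Nat.mul_le_mul_left _ (by omega)))
          _ = (2*P) * (2*Q) * 2 := by rw [hP, hQ]; ring
          _ ≤ (b+2) * (b+1) * 2 := Nat.mul_le_mul_right _ (Nat.mul_le_mul ha hb2)
          _ = 2 * ((b+2) * (b+1)) := by ring
    have hmul := mul_ident H b
    have step : (H+2) * ((H+3) * (6 * S)) ≤ (H+2) * ((H+3) * (2 * Nat.choose (b+2) (H+3))) := by
      calc (H+2) * ((H+3) * (6 * S)) = 3 * ((H+3)*(H+2)) * (2 * S) := by ring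
        _ ≤ 3 * ((H+3)*(H+2)) * (M * (M-1) * T) := Nat.mul_le_mul_left _ h2S
        _ = (3 * (M * (M-1)) * ((H+3)*(H+2))) * T := by ring
        _ ≤ (2 * ((b+2) * (b+1))) * T := Nat.mul_le_mul_right _ harith
        _ = 2 * ((b+2) * ((b+1) * T)) := by ring
        _ = 2 * ((H+2) * ((H+3) * Nat.choose (b+2) (H+3))) := by rw [hT, ← hmul]
        _ = (H+2) * ((H+3) * (2 * Nat.choose (b+2) (H+3))) := by ring
    have h6 : 6 * S ≤ 2 * Nat.choose (b+2) (H+3) :=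
      Nat.le_of_mul_le_mul_left (Nat.le_of_mul_le_mul_left step (by omega)) (by omega)
    omega
  rw [key]
  have hA : 0 ≤ Nat.choose (b+3-(M+1)) (H+3) := Nat.zero_le _
  linarith [hSle, key]
end

section
/- Let h, m, n be natural numbers with h ≥ 3, m ≥ 1, and n ≥ (h+1)m + 1. Then C(n−1, h−1) ≥ (h−1)·(n−1)·C(m−1, h−2). -/
lemma aux_pow_choose (t a b : ℕ) (ht : 1 ≤ t) (hab : t * b ≤ a) :
    ∀ k, t ^ k * Nat.choose b k ≤ Nat.choose a k := by
  intro k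
  induction k with
  | zero => simp
  | succ k ih =>
    have key : t * (b - k) ≤ a - k := by
      rcases le_or_gt b k with hb | hb
      · simp [Nat.sub_eq_zero_of_le hb]
      · have h1 : t * (b - k) + t * k = t * b := by
          rw [← Nat.mul_add, Nat.sub_add_cancel hb.le]
        have h2 : k ≤ t * k := Nat.le_mul_of_pos_left k ht
        omega
    have hmul : (t ^ (k+1) * Nat.choose b (k+1)) * (k+1) ≤ Nat.choose a (k+1) * (k+1) := by
      calc (t ^ (k+1) * Nat.choose b (k+1)) * (k+1)
          = t * (t ^ k * (Nat.choose b (k+1) * (k+1))) := by ring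
        _ = t * (t ^ k * (Nat.choose b k * (b - k))) := by rw [Nat.choose_succ_right_eq]
        _ = (t ^ k * Nat.choose b k) * (t * (b - k)) := by ring
        _ ≤ Nat.choose a k * (a - k) := Nat.mul_le_mul ih key
        _ = Nat.choose a (k+1) * (k+1) := (Nat.choose_succ_right_eq a k).symm
    exact Nat.le_of_mul_le_mul_right hmul (Nat.succ_pos k)

theorem stmt3 (h m n : ℕ) (hh : 3 ≤ h) (hm : 1 ≤ m) (hn : (h + 1) * m + 1 ≤ n) :
    (h - 1) * (n - 1) * Nat.choose (m - 1) (h - 2) ≤ Nat.choose (n - 1) (h - 1) := by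
  obtain ⟨h', rfl⟩ : ∃ h', h = h' + 3 := ⟨h - 3, by omega⟩
  obtain ⟨m', rfl⟩ : ∃ m', m = m' + 1 := ⟨m - 1, by omega⟩
  have hn2 : 4 ≤ n := by nlinarith
  obtain ⟨n', rfl⟩ : ∃ n', n = n' + 2 := ⟨n - 2, by omega⟩
  -- identity : (h-1) * C(n-1, h-1) = (n-1) * C(n-2, h-2)
  have hid : Nat.choose (n' + 1) (h' + 2) * (h' + 2) = (n' + 1) * Nat.choose n' (h' + 1) := by
    have hx := Nat.add_one_mul_choose_eq n' (h' + 1)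
    simp only [Nat.succ_eq_add_one, show h' + 1 + 1 = h' + 2 from rfl] at hx
    omega
  have hab : (h' + 4) * m' ≤ n' := by nlinarith
  have hkey : (h' + 4) ^ (h' + 1) * Nat.choose m' (h' + 1) ≤ Nat.choose n' (h' + 1) :=
    aux_pow_choose (h' + 4) n' m' (by omega) hab (h' + 1)
  have hpow : (h' + 2) * (h' + 2) ≤ (h' + 4) ^ (h' + 1) := by
    calc (h' + 2) * (h' + 2) ≤ (h' + 4) * (h' + 4) ^ h' := by
          rcases Nat.eq_zero_or_pos h' with rfl | hp
          · norm_num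
          · have : (h' + 4) ≤ (h' + 4) ^ h' := Nat.le_self_pow (by omega) _
            nlinarith
      _ = (h' + 4) ^ (h' + 1) := by ring
  have h2 : (h' + 2) * ((h' + 2) * Nat.choose m' (h' + 1)) ≤ Nat.choose n' (h' + 1) := by
    calc (h' + 2) * ((h' + 2) * Nat.choose m' (h' + 1))
        = ((h' + 2) * (h' + 2)) * Nat.choose m' (h' + 1) := by ring
      _ ≤ (h' + 4) ^ (h' + 1) * Nat.choose m' (h' + 1) :=
          Nat.mul_le_mul_right _ hpow
      _ ≤ Nat.choose n' (h' + 1) := hkey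
  -- goal simplification
  simp only [show h' + 3 - 1 = h' + 2 from rfl, show m' + 1 - 1 = m' from rfl,
    show n' + 2 - 1 = n' + 1 from rfl, show h' + 3 - 2 = h' + 1 from rfl]
  have final : ((h' + 2) * (n' + 1) * Nat.choose m' (h' + 1)) * (h' + 2)
      ≤ Nat.choose (n' + 1) (h' + 2) * (h' + 2) := by
    rw [hid]
    calc ((h' + 2) * (n' + 1) * Nat.choose m' (h' + 1)) * (h' + 2)
        = (n' + 1) * ((h' + 2) * ((h' + 2) * Nat.choose m' (h' + 1))) := by ring
      _ ≤ (n' + 1) * Nat.choose n' (h' + 1) := Nat.mul_le_mul_left _ h2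
  exact Nat.le_of_mul_le_mul_right final (by omega)
end

section
/- Let h, m, n be natural numbers with h ≥ 3, m ≥ h, and n ≥ (h−1)(2m−1). Then for every integer i with 1 ≤ i ≤ h−2: C(n−1, h−1) + (h−i) > (h−i) · ∑_{ℓ=0}^{i} C(n−m, ℓ) · C(m−1, h−ℓ−1). -/
private def TT (h m n ℓ : ℕ) : ℕ := (n - m).choose ℓ * (m - 1).choose (h - 1 - ℓ)

private lemma step4 (h m n ℓ : ℕ) (hm : h ≤ m) (hn : (h - 1) * (2 * m - 1) ≤ n)
    (hℓ : ℓ + 3 ≤ h) : 4 * TT h m n ℓ ≤ TT h m n (ℓ + 1) := by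
  obtain ⟨p, hp⟩ : ∃ p, h = ℓ + 3 + p := ⟨h - (ℓ + 3), by omega⟩
  obtain ⟨q, hq⟩ : ∃ q, m = h + q := ⟨m - h, by omega⟩
  set N := n - m with hN
  unfold TT
  rw [show h - 1 - ℓ = (p + 1) + 1 by omega, show h - 1 - (ℓ + 1) = p + 1 by omega, ← hN]
  have key : m + ℓ + 2 * (ℓ + 1) * (ℓ + q + 1) ≤ n := by
    have e1 : h - 1 = ℓ + 2 + p := by omega
    have e2 : 2 * m - 1 = 2 * ℓ + 2 * p + 2 * q + 5 := by omega
    calc m + ℓ + 2 * (ℓ + 1) * (ℓ + q + 1)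
        ≤ (ℓ + 2 + p) * (2 * ℓ + 2 * p + 2 * q + 5) := by nlinarith
      _ = (h - 1) * (2 * m - 1) := by rw [e1, e2]
      _ ≤ n := hn
  have hNl : 2 * (ℓ + 1) * (ℓ + q + 1) ≤ N - ℓ := by
    rw [hN]
    generalize hgen : 2 * (ℓ + 1) * (ℓ + q + 1) = t at key ⊢
    omega
  have scalar : 4 * (ℓ + 1) * (ℓ + q + 1) ≤ (N - ℓ) * (p + 2) := by
    calc 4 * (ℓ + 1) * (ℓ + q + 1) = (2 * (ℓ + 1) * (ℓ + q + 1)) * 2 := by ring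
      _ ≤ (N - ℓ) * (p + 2) := Nat.mul_le_mul hNl (by omega)
  have id1 : N.choose (ℓ + 1) * (ℓ + 1) = N.choose ℓ * (N - ℓ) :=
    Nat.choose_succ_right_eq N ℓ
  have id2 : (m - 1).choose ((p + 1) + 1) * ((p + 1) + 1)
      = (m - 1).choose (p + 1) * (m - 1 - (p + 1)) := Nat.choose_succ_right_eq (m - 1) (p + 1)
  rw [show m - 1 - (p + 1) = ℓ + q + 1 by omega] at id2
  have hpos : 0 < (ℓ + 1) * (ℓ + q + 1) := by positivity
  apply Nat.le_of_mul_le_mul_right _ hpos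
  calc 4 * (N.choose ℓ * (m - 1).choose ((p + 1) + 1)) * ((ℓ + 1) * (ℓ + q + 1))
      = (N.choose ℓ * (m - 1).choose ((p + 1) + 1)) * (4 * (ℓ + 1) * (ℓ + q + 1)) := by ring
    _ ≤ (N.choose ℓ * (m - 1).choose ((p + 1) + 1)) * ((N - ℓ) * (p + 2)) :=
        Nat.mul_le_mul_left _ scalar
    _ = (N.choose ℓ * (N - ℓ)) * ((m - 1).choose ((p + 1) + 1) * ((p + 1) + 1)) := by ring
    _ = (N.choose (ℓ + 1) * (ℓ + 1)) * ((m - 1).choose (p + 1) * (ℓ + q + 1)) := by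
        rw [id1, id2]
    _ = N.choose (ℓ + 1) * (m - 1).choose (p + 1) * ((ℓ + 1) * (ℓ + q + 1)) := by ring

private lemma stepLast (h m n ℓ : ℕ) (hh : 3 ≤ h) (hm : h ≤ m)
    (hn : (h - 1) * (2 * m - 1) ≤ n) (hℓ : ℓ + 2 = h) :
    3 * TT h m n ℓ ≤ 2 * TT h m n (ℓ + 1) := by
  obtain ⟨q, hq⟩ : ∃ q, m = h + q := ⟨m - h, by omega⟩
  set N := n - m with hN
  unfold TT
  rw [show h - 1 - ℓ = 1 by omega, show h - 1 - (ℓ + 1) = 0 by omega,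
    Nat.choose_one_right, Nat.choose_zero_right, mul_one, ← hN]
  have key : 2 * (m + ℓ) + 3 * (m - 1) * (ℓ + 1) ≤ 2 * n := by
    obtain ⟨b, hb⟩ : ∃ b, h = b + 3 := ⟨h - 3, by omega⟩
    have : 2 * (m + ℓ) + 3 * (m - 1) * (ℓ + 1) ≤ 2 * ((h - 1) * (2 * m - 1)) := by
      rw [show h - 1 = b + 2 by omega, show 2 * m - 1 = 2 * b + 2 * q + 5 by omega,
        show m - 1 = b + q + 2 by omega, show ℓ = b + 1 by omega, hq, hb]
      nlinarith
    omega
  have hNl : 3 * (m - 1) * (ℓ + 1) ≤ 2 * (N - ℓ) := by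
    rw [hN]
    generalize hgen : 3 * (m - 1) * (ℓ + 1) = t at key ⊢
    omega
  have id1 : N.choose (ℓ + 1) * (ℓ + 1) = N.choose ℓ * (N - ℓ) :=
    Nat.choose_succ_right_eq N ℓ
  apply Nat.le_of_mul_le_mul_right _ (Nat.succ_pos ℓ)
  calc 3 * (N.choose ℓ * (m - 1)) * (ℓ + 1)
      = N.choose ℓ * (3 * (m - 1) * (ℓ + 1)) := by ring
    _ ≤ N.choose ℓ * (2 * (N - ℓ)) := Nat.mul_le_mul_left _ hNl
    _ = 2 * (N.choose ℓ * (N - ℓ)) := by ring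
    _ = 2 * (N.choose (ℓ + 1) * (ℓ + 1)) := by rw [id1]
    _ = 2 * N.choose (ℓ + 1) * (ℓ + 1) := by ring

private lemma TTmono (h m n ℓ : ℕ) (hh : 3 ≤ h) (hm : h ≤ m)
    (hn : (h - 1) * (2 * m - 1) ≤ n) (hℓ : ℓ + 2 ≤ h) : TT h m n ℓ ≤ TT h m n (ℓ + 1) := by
  by_cases hc : ℓ + 3 ≤ h
  · linarith [step4 h m n ℓ hm hn hc]
  · linarith [stepLast h m n ℓ hh hm hn (by omega)]

private lemma sum23 (h m n : ℕ) (hh : 3 ≤ h) (hm : h ≤ m)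
    (hn : (h - 1) * (2 * m - 1) ≤ n) :
    ∀ ℓ, ℓ + 2 ≤ h → 2 * (∑ j ∈ Finset.range (ℓ + 1), TT h m n j) ≤ 3 * TT h m n ℓ := by
  intro ℓ
  induction ℓ with
  | zero => intro _; rw [Finset.sum_range_one]; omega
  | succ ℓ ih =>
    intro hl
    have h1 := ih (by omega)
    have h2 := step4 h m n ℓ hm hn (by omega)
    rw [Finset.sum_range_succ]
    linarith

theorem stmt5 (h m n : ℕ) (hh : 3 ≤ h) (hm : h ≤ m) (hn : (h - 1) * (2 * m - 1) ≤ n)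
    (i : ℕ) (hi1 : 1 ≤ i) (hi2 : i ≤ h - 2) :
    Nat.choose (n - 1) (h - 1) + (h - i)
      > (h - i) * ∑ l ∈ Finset.range (i + 1),
          Nat.choose (n - m) l * Nat.choose (m - 1) (h - l - 1) := by
  have hmn : m + 1 ≤ n := by
    have : 2 * (2 * m - 1) ≤ (h - 1) * (2 * m - 1) := Nat.mul_le_mul_right _ (by omega)
    omega
  have hsum : (∑ l ∈ Finset.range (i + 1),
      Nat.choose (n - m) l * Nat.choose (m - 1) (h - l - 1))
      = ∑ l ∈ Finset.range (i + 1), TT h m n l := by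
    refine Finset.sum_congr rfl fun l _ => ?_
    rw [TT, show h - l - 1 = h - 1 - l by omega]
  rw [hsum]
  have van : (n - 1).choose (h - 1) = ∑ ℓ ∈ Finset.range h, TT h m n ℓ := by
    rw [show n - 1 = (n - m) + (m - 1) by omega, Nat.add_choose_eq,
      Finset.Nat.sum_antidiagonal_eq_sum_range_succ_mk, show (h - 1).succ = h by omega]
    rfl
  set S : ℕ := ∑ j ∈ Finset.range (i + 1), TT h m n j with hS
  have base : S ≤ TT h m n (i + 1) := by
    have h1 := sum23 h m n hh hm hn i (by omega)
    rw [← hS] at h1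
    by_cases hc : i + 3 ≤ h
    · linarith [step4 h m n i hm hn hc]
    · linarith [stepLast h m n i hh hm hn (by omega)]
  have key : ∀ ℓ, i + 1 ≤ ℓ → ℓ + 1 ≤ h → S ≤ TT h m n ℓ := by
    intro ℓ
    induction ℓ with
    | zero => omega
    | succ ℓ ih =>
      intro h1 h2
      rcases Nat.lt_or_ge i ℓ with hc | hc
      · exact (ih (by omega) (by omega)).trans (TTmono h m n ℓ hh hm hn (by omega))
      · have hiℓ : i = ℓ := by omega
        subst hiℓ
        exact base
  have split : (∑ ℓ ∈ Finset.range (i + 1), TT h m n ℓ)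
      + (∑ ℓ ∈ Finset.Ico (i + 1) h, TT h m n ℓ) = ∑ ℓ ∈ Finset.range h, TT h m n ℓ :=
    Finset.sum_range_add_sum_Ico _ (by omega)
  have bound : (h - (i + 1)) * S ≤ ∑ ℓ ∈ Finset.Ico (i + 1) h, TT h m n ℓ := by
    have := Finset.sum_le_sum (f := fun _ : ℕ => S) (g := TT h m n)
      (s := Finset.Ico (i + 1) h) (fun ℓ hℓ => by
        rw [Finset.mem_Ico] at hℓ
        exact key ℓ hℓ.1 hℓ.2)
    simpa [Finset.sum_const, Nat.card_Ico, smul_eq_mul] using this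
  have main : (h - i) * S ≤ (n - 1).choose (h - 1) := by
    rw [van, ← split, show h - i = (h - (i + 1)) + 1 by omega, add_mul, one_mul, ← hS]
    omega
  omega
end
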